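/- (Theorem 4.) Let t₀ ∈ ℝ, let z : ℝ → ℝ be differentiable on [t₀, ∞), let g, Δ : ℝ → ℝ be functions, and let constants satisfy σ₁ > 0, S ≥ σ₁, L_g ≥ 0, δ ≥ 0, and the gain condition K̄ > L_g/σ₁. Suppose for all t ≥ t₀: z'(t) = −K̄·(S·z(t) + Δ(t)) + g(t); |g(t)| ≤ L_g·|z(t)|; and |Δ(t)| ≤ δ. Define k₅ = K̄·σ₁ − L_g and β₄ = K̄·δ/k₅. Then for all t ≥ t₀, |z(t)| ≤ √( z(t₀)²·exp(−k₅·(t − t₀)) + β₄²·(1 − exp(−k₅·(t − t₀))) ); in particular the depth estimation error is uniformly ultimately bounded with limsup_{t → ∞} |z(t)| ≤ β₄. -/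

import Mathlib

/-!
With `V = z²`, the error dynamics, the Lipschitz bound on `g`, the bound on `Δ` and `σ₁ ≤ S`
give `V' ≤ -2 k₅ z² + 2 K̄ δ |z|`, and Young's inequality `2 β₄ |z| ≤ z² + β₄²` turns this into
the linear differential inequality `V' ≤ -k₅ V + k₅ β₄²`. Grönwall's inequality then bounds `V`
by the solution of `W' = -k₅ W + k₅ β₄²`, which relaxes exponentially to `β₄²`.
-/

open Set Filter Real
open scoped Topology

theorem le_gronwallBound_of_hasDerivAt_le {f f' : ℝ → ℝ} {K ε a : ℝ}
    (hf : ∀ x ∈ Ici a, HasDerivAt f (f' x) x) (bound : ∀ x ∈ Ici a, f' x ≤ K * f x + ε) :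
    ∀ x ∈ Ici a, f x ≤ gronwallBound (f a) K ε (x - a) := by
  intro b hb
  refine le_gronwallBound_of_liminf_deriv_right_le (fun x hx => ?_) (fun x hx r hr => ?_) le_rfl
    (fun x hx => bound x hx.1) b ⟨hb, le_rfl⟩
  · exact (hf x hx.1).continuousAt.continuousWithinAt
  · exact (hf x hx.1).hasDerivWithinAt.liminf_right_slope_le hr

theorem gronwallBound_neg_mul (δ k c x : ℝ) (hk : k ≠ 0) :
    gronwallBound δ (-k) (k * c) x = δ * exp (-k * x) + c * (1 - exp (-k * x)) := by
  rw [gronwallBound_of_K_ne_0 (neg_ne_zero.mpr hk)]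
  field_simp
  ring

theorem tendsto_exp_relaxation {k : ℝ} (hk : 0 < k) (a c₀ c : ℝ) :
    Tendsto (fun t => c₀ * exp (-k * (t - a)) + c * (1 - exp (-k * (t - a)))) atTop (𝓝 c) := by
  have hexp : Tendsto (fun t => exp (-k * (t - a))) atTop (𝓝 0) :=
    tendsto_exp_atBot.comp <| (tendsto_atTop_add_const_right _ _ tendsto_id).const_mul_atTop_of_neg
      (neg_neg_of_pos hk)
  simpa using (hexp.const_mul c₀).add (((tendsto_const_nhds (x := (1 : ℝ))).sub hexp).const_mul c)

theorem limsup_le_of_eventually_le_of_tendsto {α : Type*} {l : Filter α} [l.NeBot]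
    {f u : α → ℝ} {b : ℝ} (hf : IsCoboundedUnder (· ≤ ·) l f) (hfu : f ≤ᶠ[l] u)
    (hu : Tendsto u l (𝓝 b)) : limsup f l ≤ b :=
  (limsup_le_limsup hfu hf hu.isBoundedUnder_le).trans_eq hu.limsup_eq

/-- The left side is `(z²)'` along the error dynamics `z' = -K (S z + Δ) + g`. -/
theorem two_mul_mul_error_dynamics_le {z g Δ σ₁ S Lg δ K k β : ℝ} (hS : σ₁ ≤ S) (hK : 0 ≤ K)
    (hk : 0 ≤ k) (hk_def : k = K * σ₁ - Lg) (hKδ : K * δ = k * β)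
    (hg : |g| ≤ Lg * |z|) (hΔ : |Δ| ≤ δ) :
    2 * z * (-K * (S * z + Δ) + g) ≤ -k * z ^ 2 + k * β ^ 2 := by
  have hzg : z * g ≤ Lg * z ^ 2 := by
    calc z * g ≤ |z| * |g| := by rw [← abs_mul]; exact le_abs_self _
      _ ≤ |z| * (Lg * |z|) := by gcongr
      _ = Lg * z ^ 2 := by rw [← sq_abs z]; ring
  have hzΔ : -(z * Δ) ≤ δ * |z| := by
    calc -(z * Δ) ≤ |z| * |Δ| := by rw [← abs_mul]; exact neg_le_abs _
      _ ≤ |z| * δ := by gcongr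
      _ = δ * |z| := mul_comm _ _
  have hS' : σ₁ * z ^ 2 ≤ S * z ^ 2 := by gcongr
  have young : 2 * β * |z| ≤ z ^ 2 + β ^ 2 := by
    nlinarith [sq_nonneg (|z| - β), sq_abs z]
  calc 2 * z * (-K * (S * z + Δ) + g)
      = -2 * K * (S * z ^ 2) + 2 * K * -(z * Δ) + 2 * (z * g) := by ring
    _ ≤ -2 * K * (σ₁ * z ^ 2) + 2 * K * (δ * |z|) + 2 * (Lg * z ^ 2) := by
        have hKS := mul_le_mul_of_nonneg_left hS' hK
        have hKΔ := mul_le_mul_of_nonneg_left hzΔ hK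
        linarith
    _ = -2 * k * z ^ 2 + k * (2 * β * |z|) := by
        linear_combination (2 * z ^ 2) * hk_def + (2 * |z|) * hKδ
    _ ≤ -2 * k * z ^ 2 + k * (z ^ 2 + β ^ 2) := by gcongr
    _ = -k * z ^ 2 + k * β ^ 2 := by ring

/-- Theorem 4: UUB of the reduced-order concurrent-learning observer depth error when
the history stack is complete, without persistence of excitation, under the gain
condition `K̄ > L_g/σ₁`. -/
theorem reduced_order_complete_stack_UUB
    (t₀ : ℝ) (z : ℝ → ℝ) (g Δ : ℝ → ℝ)
    (σ₁ S Lg δ Kbar : ℝ)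
    (hσ₁ : 0 < σ₁) (hS : σ₁ ≤ S) (hLg : 0 ≤ Lg) (hδ : 0 ≤ δ)
    (hgain : Lg / σ₁ < Kbar)
    (hz : ∀ t ∈ Set.Ici t₀, HasDerivAt z (-Kbar * (S * z t + Δ t) + g t) t)
    (hg : ∀ t ∈ Set.Ici t₀, |g t| ≤ Lg * |z t|)
    (hΔ : ∀ t ∈ Set.Ici t₀, |Δ t| ≤ δ)
    (k₅ β₄ : ℝ) (hk₅ : k₅ = Kbar * σ₁ - Lg) (hβ₄ : β₄ = Kbar * δ / k₅) :
    (∀ t ∈ Set.Ici t₀,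
      |z t| ≤ Real.sqrt (z t₀ ^ 2 * Real.exp (-k₅ * (t - t₀))
        + β₄ ^ 2 * (1 - Real.exp (-k₅ * (t - t₀))))) ∧
    Filter.limsup (fun t => |z t|) Filter.atTop ≤ β₄ := by
  have hK : 0 ≤ Kbar := (div_nonneg hLg hσ₁.le).trans hgain.le
  have hk₅_pos : 0 < k₅ := by rw [hk₅, sub_pos, ← div_lt_iff₀ hσ₁]; exact hgain
  have hβ₄_nonneg : 0 ≤ β₄ := by rw [hβ₄]; positivity
  have hKδ : Kbar * δ = k₅ * β₄ := by rw [hβ₄]; field_simp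
  have hV : ∀ t ∈ Ici t₀, z t ^ 2 ≤ z t₀ ^ 2 * exp (-k₅ * (t - t₀))
      + β₄ ^ 2 * (1 - exp (-k₅ * (t - t₀))) := by
    intro t ht
    rw [← gronwallBound_neg_mul _ _ _ _ hk₅_pos.ne']
    refine le_gronwallBound_of_hasDerivAt_le (fun x hx => (hz x hx).pow 2) (fun x hx => ?_) t ht
    simpa [mul_assoc] using
      two_mul_mul_error_dynamics_le hS hK hk₅_pos.le hk₅ hKδ (hg x hx) (hΔ x hx)
  have hbound : ∀ t ∈ Ici t₀, |z t| ≤ √(z t₀ ^ 2 * exp (-k₅ * (t - t₀))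
      + β₄ ^ 2 * (1 - exp (-k₅ * (t - t₀)))) := fun t ht => abs_le_sqrt (hV t ht)
  refine ⟨hbound, limsup_le_of_eventually_le_of_tendsto
    (isCoboundedUnder_le_of_le atTop fun t => abs_nonneg (z t))
    ((eventually_ge_atTop t₀).mono hbound) ?_⟩
  have hlim := (tendsto_exp_relaxation hk₅_pos t₀ (z t₀ ^ 2) (β₄ ^ 2)).sqrt
  rwa [Real.sqrt_sq hβ₄_nonneg] at hlim
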